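/- arXiv:2101.09327 — 6 statements merged into one kernel-verified Lean document; each statement's English description precedes it below -/
import Mathlib

section
/- Under the same recursion Q_{k-1} = α (Q_k + α I)^{-1} Q_k + F_{k-1}* L_{k-1} F_{k-1} with Q_N = F_N* L_N F_N, if additionally ‖L_k‖ ≤ 1 for all k, then for every k one has ‖Q_k‖ ≤ α + max_j ‖F_j‖². -/
/-!
With `T = Q + α` (invertible for positive `Q`, as `⟪T x, x⟫ ≥ α ‖x‖²`), the map
`B = α T⁻¹ Q` sends `T w` to `α Q w`. Since `‖T w‖² = ‖Q w‖² + 2α ⟪Q w, w⟫ + α² ‖w‖² ≥ ‖Q w‖²`,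
this gives `‖B‖ ≤ α`, and the same substitution shows that `B` is again positive. Hence
positivity of `Q_k` propagates down the recursion, and at each step
`‖Q_k‖ ≤ ‖B‖ + ‖F_k* L_k F_k‖ ≤ α + ‖F_k‖²`.
-/

open scoped RealInnerProductSpace

namespace ContinuousLinearMap

lemma norm_adjoint_comp_comp_le {𝕜 E F : Type*} [RCLike 𝕜]
    [NormedAddCommGroup E] [InnerProductSpace 𝕜 E] [CompleteSpace E]
    [NormedAddCommGroup F] [InnerProductSpace 𝕜 F] [CompleteSpace F]
    (T : F →L[𝕜] F) (S : E →L[𝕜] F) :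
    ‖S.adjoint ∘L (T ∘L S)‖ ≤ ‖T‖ * ‖S‖ ^ 2 :=
  calc ‖S.adjoint ∘L (T ∘L S)‖ ≤ ‖S.adjoint‖ * (‖T‖ * ‖S‖) :=
        (opNorm_comp_le _ _).trans (by gcongr; exact opNorm_comp_le _ _)
    _ = ‖T‖ * ‖S‖ ^ 2 := by rw [adjoint.norm_map]; ring

variable {E : Type*} [NormedAddCommGroup E] [InnerProductSpace ℝ E]
  {Q : E →L[ℝ] E} {α : ℝ}

lemma IsPositive.norm_apply_le_norm_add_smul (hQ : Q.IsPositive) (hα : 0 ≤ α) (w : E) :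
    ‖Q w‖ ≤ ‖Q w + α • w‖ := by
  have hcross : 0 ≤ ⟪Q w, α • w⟫ := by
    rw [real_inner_smul_right]
    exact mul_nonneg hα (hQ.inner_nonneg_left w)
  refine (sq_le_sq₀ (norm_nonneg _) (norm_nonneg _)).mp ?_
  rw [norm_add_sq_real]
  linarith [sq_nonneg ‖α • w‖]

/-- The operator `B_{k+1}` of the Riccati recursion. -/
noncomputable def riccatiMap (α : ℝ) (Q : E →L[ℝ] E) : E →L[ℝ] E :=
  α • (Ring.inverse (Q + α • (1 : E →L[ℝ] E)) * Q)

variable [CompleteSpace E]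

lemma IsPositive.isUnit_add_smul_one (hQ : Q.IsPositive) (hα : 0 < α) :
    IsUnit (Q + α • (1 : E →L[ℝ] E)) := by
  refine isUnit_of_forall_le_norm_inner_map _ (c := ⟨α, hα.le⟩) (by exact_mod_cast hα)
    fun x => ?_
  have hinner : ⟪(Q + α • (1 : E →L[ℝ] E)) x, x⟫ = ⟪Q x, x⟫ + α * ‖x‖ ^ 2 := by
    simp [inner_add_left, real_inner_smul_left]
  have hQx := hQ.inner_nonneg_left x
  rw [hinner, Real.norm_of_nonneg (by positivity)]
  change ‖x‖ ^ 2 * α ≤ _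
  linarith

lemma IsPositive.surjective_add_smul_one (hQ : Q.IsPositive) (hα : 0 < α) :
    Function.Surjective (Q + α • (1 : E →L[ℝ] E)) :=
  (isUnit_iff_bijective.mp (hQ.isUnit_add_smul_one hα)).2

lemma IsPositive.riccatiMap_apply_add_smul_one (hQ : Q.IsPositive) (hα : 0 < α) (w : E) :
    riccatiMap α Q ((Q + α • (1 : E →L[ℝ] E)) w) = α • Q w := by
  set T := Q + α • (1 : E →L[ℝ] E)
  have hcomm : Q * T = T * Q := by
    simp only [T, mul_add, add_mul, mul_smul_comm, smul_mul_assoc, mul_one, one_mul]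
  have hcancel : Ring.inverse T * T = 1 := Ring.inverse_mul_cancel _ (hQ.isUnit_add_smul_one hα)
  have hconj : Ring.inverse T * Q * T = Q := by
    rw [mul_assoc, hcomm, ← mul_assoc, hcancel, one_mul]
  calc riccatiMap α Q (T w) = α • (Ring.inverse T * Q * T) w := rfl
    _ = α • Q w := by rw [hconj]

lemma IsPositive.isPositive_riccatiMap (hQ : Q.IsPositive) (hα : 0 < α) :
    (riccatiMap α Q).IsPositive := by
  have hB := hQ.riccatiMap_apply_add_smul_one hα
  have hT := hQ.surjective_add_smul_one hα
  have happly (w : E) : (Q + α • (1 : E →L[ℝ] E)) w = Q w + α • w := rfl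
  refine (isPositive_iff _).mpr ⟨fun x y => ?_, fun x => ?_⟩
  · obtain ⟨w, rfl⟩ := hT x
    obtain ⟨v, rfl⟩ := hT y
    simp only [coe_coe, hB]
    simp only [happly, inner_add_left, inner_add_right, real_inner_smul_left,
      real_inner_smul_right, hQ.inner_left_eq_inner_right w v]
  · obtain ⟨w, rfl⟩ := hT x
    rw [hB, happly, real_inner_smul_left, inner_add_right, real_inner_smul_right,
      real_inner_self_eq_norm_sq]
    have hQw := hQ.inner_nonneg_left w
    positivity

lemma IsPositive.norm_riccatiMap_le (hQ : Q.IsPositive) (hα : 0 < α) :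
    ‖riccatiMap α Q‖ ≤ α := by
  refine opNorm_le_bound _ hα.le fun x => ?_
  obtain ⟨w, rfl⟩ := hQ.surjective_add_smul_one hα x
  rw [hQ.riccatiMap_apply_add_smul_one hα, norm_smul, Real.norm_of_nonneg hα.le]
  gcongr
  exact hQ.norm_apply_le_norm_add_smul hα.le w

end ContinuousLinearMap

/-- Under the Riccati recursion `Q_{k-1} = α (Q_k + α I)⁻¹ Q_k + F_{k-1}* L_{k-1} F_{k-1}`
with `Q_N = F_N* L_N F_N` and `‖L_k‖ ≤ 1`, one has `‖Q_k‖ ≤ α + max_j ‖F_j‖²`. -/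
theorem riccati_recursion_norm_bound
    {X Y : Type*} [NormedAddCommGroup X] [InnerProductSpace ℝ X] [CompleteSpace X]
    [NormedAddCommGroup Y] [InnerProductSpace ℝ Y] [CompleteSpace Y]
    (N : ℕ) (α : ℝ) (hα : 0 < α)
    (F : ℕ → X →L[ℝ] Y) (L : ℕ → Y →L[ℝ] Y)
    (hLsa : ∀ k, IsSelfAdjoint (L k))
    (hLpos : ∀ k (z : Y), 0 ≤ ⟪z, L k z⟫)
    (hLnorm : ∀ k, ‖L k‖ ≤ 1)
    (Q : ℕ → X →L[ℝ] X)
    (hQN : Q N = (F N).adjoint ∘L ((L N) ∘L (F N)))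
    (hrec : ∀ k < N, Q k =
      α • (Ring.inverse (Q (k + 1) + α • (1 : X →L[ℝ] X)) * Q (k + 1)) +
        (F k).adjoint ∘L ((L k) ∘L (F k))) :
    ∀ k ≤ N, ‖Q k‖ ≤ α + (Finset.range (N + 1)).sup'
      (Finset.nonempty_range_iff.mpr (Nat.succ_ne_zero N)) (fun j => ‖F j‖ ^ 2) := by
  set M := (Finset.range (N + 1)).sup'
    (Finset.nonempty_range_iff.mpr (Nat.succ_ne_zero N)) (fun j => ‖F j‖ ^ 2)
  have hFM (k : ℕ) (hk : k ≤ N) : ‖F k‖ ^ 2 ≤ M :=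
    Finset.le_sup' (fun j => ‖F j‖ ^ 2) (Finset.mem_range_succ_iff.mpr hk)
  have hL (k : ℕ) : (L k).IsPositive :=
    (ContinuousLinearMap.isPositive_iff' _).mpr
      ⟨hLsa k, fun z => real_inner_comm z (L k z) ▸ hLpos k z⟩
  have hC (k : ℕ) : ‖(F k).adjoint ∘L ((L k) ∘L (F k))‖ ≤ ‖F k‖ ^ 2 :=
    (ContinuousLinearMap.norm_adjoint_comp_comp_le _ _).trans
      (mul_le_of_le_one_left (sq_nonneg _) (hLnorm k))
  have hQ (k : ℕ) (hk : k ≤ N) : (Q k).IsPositive := by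
    induction hk using Nat.decreasingInduction with
    | self => rw [hQN]; exact (hL N).adjoint_conj (F N)
    | of_succ k hk ih =>
      rw [hrec k hk]
      exact (ih.isPositive_riccatiMap hα).add ((hL k).adjoint_conj (F k))
  intro k hk
  rcases hk.lt_or_eq with hk | rfl
  · rw [hrec k hk]
    calc _ ≤ α + ‖F k‖ ^ 2 :=
          (norm_add_le _ _).trans (add_le_add ((hQ _ hk).norm_riccatiMap_le hα) (hC k))
      _ ≤ α + M := by gcongr; exact hFM k hk.le
  · rw [hQN]
    linarith [hC k, hFM k le_rfl]
end

section
/- Let α > 0 and suppose Q_k, b_k, u_k (k = 0,…,N) satisfy the recursions Q_{k-1} = α(Q_k + αI)^{-1}Q_k + F_{k-1}* L_{k-1} F_{k-1}, b_{k-1} = α(Q_k + αI)^{-1} b_k - F_{k-1}* L_{k-1} y_{k-1}, and u_{k+1} = (Q_{k+1} + αI)^{-1}(α u_k - b_{k+1}), with terminal conditions Q_N = F_N* L_N F_N, b_N = -F_N* L_N y_N. If one extends u by u_{N+1} := u_N, then for every k = 1,…,N the discrete Euler–Lagrange equation F_k* L_k F_k u_k - α(u_{k-1} - 2u_k + u_{k+1})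 = F_k* L_k y_k holds. -/
open scoped RealInnerProductSpace

/-!
Write `A_k = F_k* L_k F_k` and `R_k = (Q_k + αI)⁻¹`. The forward recursion says exactly
`α (u_{k-1} - u_k) = Q_k u_k + b_k`. For `k < N`, inserting the backward recursions for `Q_k` and
`b_k` turns the right-hand side into `α R_{k+1} (Q_{k+1} u_k + b_{k+1}) + A_k u_k - F_k* L_k y_k`,
and `R_{k+1} (Q_{k+1} u_k + b_{k+1}) = u_k - u_{k+1}` is again the forward recursion; for `k = N`
the terminal conditions and `u_{N+1} = u_N` give the equation directly. All of this needs
`Q_k + αI` to be invertible, which follows by Lax–Milgram once `⟪z, Q_k z⟫ ≥ 0`, and this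
nonnegativity propagates down the Riccati recursion.
-/

namespace ContinuousLinearMap

section Inverse

variable {X : Type*} [NormedAddCommGroup X] [NormedSpace ℝ X]

lemma smul_sub_eq_apply_add_of_eq_inverse {T : X →L[ℝ] X} {α : ℝ} {u v b : X}
    (hT : IsUnit (T + α • 1)) (hv : v = Ring.inverse (T + α • 1) (α • u - b)) :
    α • (u - v) = T v + b := by
  have hv' : (T + α • 1) v = α • u - b := by
    rw [hv, ← mul_apply_eq_comp, Ring.mul_inverse_cancel _ hT, one_apply_eq_self]
  rw [add_apply, smul_apply, one_apply_eq_self] at hv'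
  linear_combination (norm := module) -hv'

lemma inverse_mul_apply_add_inverse_apply_of_eq_inverse {T : X →L[ℝ] X} {α : ℝ} {u v b : X}
    (hT : IsUnit (T + α • 1)) (hv : v = Ring.inverse (T + α • 1) (α • u - b)) :
    (Ring.inverse (T + α • 1) * T) u + Ring.inverse (T + α • 1) b = u - v := by
  set R := Ring.inverse (T + α • 1)
  have hRT : R ((T + α • 1) u) = u := by
    rw [← mul_apply_eq_comp, Ring.inverse_mul_cancel _ hT, one_apply_eq_self]
  rw [add_apply, smul_apply, one_apply_eq_self, map_add, map_smul] at hRT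
  rw [hv, map_sub, map_smul, mul_apply_eq_comp]
  linear_combination (norm := module) hRT

end Inverse

section Nonneg

variable {X : Type*} [NormedAddCommGroup X] [InnerProductSpace ℝ X] [CompleteSpace X]

lemma isUnit_add_smul_one_of_inner_nonneg {T : X →L[ℝ] X} {α : ℝ} (hα : 0 < α)
    (hT : ∀ z, 0 ≤ ⟪z, T z⟫) : IsUnit (T + α • 1) := by
  refine isUnit_of_forall_le_norm_inner_map _ (c := ⟨α, hα.le⟩) hα fun z => ?_
  calc ‖z‖ ^ 2 * α ≤ ⟪z, T z⟫ + α * ‖z‖ ^ 2 := by linarith [hT z]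
    _ = ⟪(T + α • 1) z, z⟫ := by
      rw [add_apply, smul_apply, one_apply_eq_self, inner_add_left, real_inner_smul_left,
        real_inner_self_eq_norm_sq, real_inner_comm]
    _ ≤ ‖⟪(T + α • 1) z, z⟫‖ := Real.le_norm_self _

/-- `R = (T + αI)⁻¹` commutes with `T`, so with `w = R z` we get
`⟪z, R T z⟫ = ⟪T w + α w, T w⟫ ≥ 0`. -/
lemma inner_inverse_add_smul_one_mul_nonneg {T : X →L[ℝ] X} {α : ℝ} (hα : 0 < α)
    (hT : ∀ z, 0 ≤ ⟪z, T z⟫) (z : X) :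
    0 ≤ ⟪z, (Ring.inverse (T + α • 1) * T) z⟫ := by
  obtain ⟨S, hS⟩ := isUnit_add_smul_one_of_inner_nonneg hα hT
  have hcomm : Commute (Ring.inverse (T + α • 1)) T := by
    rw [← hS, Ring.inverse_unit]
    exact .units_inv_left (hS ▸ (Commute.refl T).add_left ((Commute.one_left T).smul_left α))
  set R := Ring.inverse (T + α • 1)
  have hz : T (R z) + α • R z = z := by
    have := congrArg (· z) (Ring.mul_inverse_cancel _ (hS ▸ S.isUnit))
    simpa only [mul_apply_eq_comp, add_apply, smul_apply, one_apply_eq_self] using this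
  calc 0 ≤ ⟪T (R z) + α • R z, T (R z)⟫ := by
        rw [inner_add_left, real_inner_smul_left]
        exact add_nonneg real_inner_self_nonneg (mul_nonneg hα.le (hT _))
    _ = ⟪z, (R * T) z⟫ := by rw [hz, hcomm.eq, mul_apply_eq_comp]

lemma inner_adjoint_comp_comp_nonneg {Y : Type*} [NormedAddCommGroup Y] [InnerProductSpace ℝ Y]
    [CompleteSpace Y] (F : X →L[ℝ] Y) {L : Y →L[ℝ] Y} (hL : ∀ z, 0 ≤ ⟪z, L z⟫) (z : X) :
    0 ≤ ⟪z, (F.adjoint ∘L (L ∘L F)) z⟫ := by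
  rw [comp_apply, adjoint_inner_right]
  exact hL (F z)

lemma inner_nonneg_of_riccati {Q A : ℕ → X →L[ℝ] X} {α : ℝ} {N : ℕ} (hα : 0 < α)
    (hA : ∀ k z, 0 ≤ ⟪z, A k z⟫) (hQN : ∀ z, 0 ≤ ⟪z, Q N z⟫)
    (hQrec : ∀ k < N, Q k = α • (Ring.inverse (Q (k + 1) + α • 1) * Q (k + 1)) + A k) :
    ∀ k ≤ N, ∀ z, 0 ≤ ⟪z, Q k z⟫ := by
  refine fun k hk => Nat.decreasingInduction (motive := fun k _ => ∀ z, 0 ≤ ⟪z, Q k z⟫)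
    (fun k hk ih z => ?_) hQN hk
  rw [hQrec k hk, add_apply, smul_apply, inner_add_right, real_inner_smul_right]
  exact add_nonneg (mul_nonneg hα.le (inner_inverse_add_smul_one_mul_nonneg hα ih z)) (hA k z)

end Nonneg

end ContinuousLinearMap

theorem dynamic_programming_iterates_satisfy_discrete_EulerLagrange_general
    {X Y : Type*} [NormedAddCommGroup X] [InnerProductSpace ℝ X] [CompleteSpace X]
    [NormedAddCommGroup Y] [InnerProductSpace ℝ Y] [CompleteSpace Y]
    (N : ℕ) (α : ℝ) (hα : 0 < α)
    (F : ℕ → X →L[ℝ] Y) (L : ℕ → Y →L[ℝ] Y)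
    (hLpos : ∀ k (z : Y), 0 ≤ ⟪z, L k z⟫)
    (y : ℕ → Y) (Q : ℕ → X →L[ℝ] X) (b : ℕ → X) (u : ℕ → X)
    (hQN : Q N = (F N).adjoint ∘L ((L N) ∘L (F N)))
    (hbN : b N = -((F N).adjoint ((L N) (y N))))
    (hQrec : ∀ k < N, Q k =
      α • (Ring.inverse (Q (k + 1) + α • (1 : X →L[ℝ] X)) * Q (k + 1)) +
        (F k).adjoint ∘L ((L k) ∘L (F k)))
    (hbrec : ∀ k < N, b k =
      α • (Ring.inverse (Q (k + 1) + α • (1 : X →L[ℝ] X))) (b (k + 1)) -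
        (F k).adjoint ((L k) (y k)))
    (hurec : ∀ k < N, u (k + 1) =
      (Ring.inverse (Q (k + 1) + α • (1 : X →L[ℝ] X))) (α • u k - b (k + 1)))
    (hext : u (N + 1) = u N) :
    ∀ k, 1 ≤ k → k ≤ N →
      (F k).adjoint ((L k) ((F k) (u k))) -
        α • (u (k - 1) - (2 : ℝ) • u k + u (k + 1)) =
      (F k).adjoint ((L k) (y k)) := by
  open ContinuousLinearMap in
  have hA k := inner_adjoint_comp_comp_nonneg (F k) (hLpos k)
  have hunit : ∀ k ≤ N, IsUnit (Q k + α • 1) := fun k hk =>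
    isUnit_add_smul_one_of_inner_nonneg hα (inner_nonneg_of_riccati hα hA (hQN ▸ hA N) hQrec k hk)
  intro k hk hkN
  obtain ⟨j, rfl⟩ : ∃ j, k = j + 1 := ⟨k - 1, by omega⟩
  have hstep := smul_sub_eq_apply_add_of_eq_inverse (hunit _ hkN) (hurec j (by omega))
  rw [Nat.add_sub_cancel]
  rcases hkN.eq_or_lt with rfl | hlt
  · rw [hQN, hbN, comp_apply, comp_apply] at hstep
    rw [hext]
    linear_combination (norm := module) -hstep
  · have hback := inverse_mul_apply_add_inverse_apply_of_eq_inverse (hunit _ hlt) (hurec _ hlt)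
    rw [hQrec _ hlt, hbrec _ hlt] at hstep
    simp only [add_apply, smul_apply, comp_apply] at hstep
    linear_combination (norm := module) -hstep - α • hback

/-- The dynamic-programming iterates `Q_k, b_k, u_k` (with `u_{N+1} := u_N`) satisfy the
discrete Euler–Lagrange equation
`F_k* L_k F_k u_k - α(u_{k-1} - 2u_k + u_{k+1}) = F_k* L_k y_k` for `k = 1,…,N`. -/
theorem dynamic_programming_iterates_satisfy_discrete_EulerLagrange
    {X Y : Type*} [NormedAddCommGroup X] [InnerProductSpace ℝ X] [CompleteSpace X]
    [NormedAddCommGroup Y] [InnerProductSpace ℝ Y] [CompleteSpace Y]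
    (N : ℕ) (α : ℝ) (hα : 0 < α)
    (F : ℕ → X →L[ℝ] Y) (L : ℕ → Y →L[ℝ] Y)
    (hLsa : ∀ k, IsSelfAdjoint (L k))
    (hLpos : ∀ k (z : Y), 0 ≤ ⟪z, L k z⟫)
    (y : ℕ → Y) (Q : ℕ → X →L[ℝ] X) (b : ℕ → X) (u : ℕ → X)
    (hQN : Q N = (F N).adjoint ∘L ((L N) ∘L (F N)))
    (hbN : b N = -((F N).adjoint ((L N) (y N))))
    (hQrec : ∀ k < N, Q k =
      α • (Ring.inverse (Q (k + 1) + α • (1 : X →L[ℝ] X)) * Q (k + 1)) +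
        (F k).adjoint ∘L ((L k) ∘L (F k)))
    (hbrec : ∀ k < N, b k =
      α • (Ring.inverse (Q (k + 1) + α • (1 : X →L[ℝ] X))) (b (k + 1)) -
        (F k).adjoint ((L k) (y k)))
    (hurec : ∀ k < N, u (k + 1) =
      (Ring.inverse (Q (k + 1) + α • (1 : X →L[ℝ] X))) (α • u k - b (k + 1)))
    (hext : u (N + 1) = u N) :
    ∀ k, 1 ≤ k → k ≤ N →
      (F k).adjoint ((L k) ((F k) (u k))) -
        α • (u (k - 1) - (2 : ℝ) • u k + u (k + 1)) =
      (F k).adjoint ((L k) (y k)) :=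
  dynamic_programming_iterates_satisfy_discrete_EulerLagrange_general N α hα F L hLpos y Q b u hQN
    hbN hQrec hbrec hurec hext
end

section
/- Let u : [0,T] → X be twice continuously differentiable and satisfy F(t)* L(t) F(t) u(t) - α u''(t) = F(t)* L(t) y(t) for all t ∈ [0,T], with u(0) = u_0 and u'(T) = 0. Then u is a minimizer over the affine set {w ∈ H¹((0,T); X) ∩ C²: w(0) = u_0} of the Tikhonov functional J(w) = ½ ∫_0^T ⟨F(t)w(t) - y(t), L(t)(F(t)w(t) - y(t))⟩ + α ‖w'(t)‖² dt. -/
open scoped RealInnerProductSpace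

/-!
Write `w = u + h` with `h 0 = 0`. Pointwise, the integrand of `J` at `w` is the integrand at `u`,
plus twice the cross term `⟪F h, L (F u - y)⟫ + α ⟪u', h'⟫`, plus the integrand at `h` with
`y = 0`. The Euler–Lagrange equation turns the cross term into `α (⟪u', h'⟫ + ⟪u'', h⟫)`, the
derivative of `α ⟪u', h⟫`, so it integrates to the boundary term `α ⟪u' T, h T⟫ - α ⟪u' 0, h 0⟫`,
which vanishes because `u' T = 0` and `h 0 = 0`. The remaining term is nonnegative since `L ≥ 0`
and `α > 0`.
-/

open intervalIntegral
open MeasureTheory (volume)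

theorem LinearMap.IsSymmetric.inner_add_apply_add {Y : Type*} [NormedAddCommGroup Y]
    [InnerProductSpace ℝ Y] {S : Y →ₗ[ℝ] Y} (hS : S.IsSymmetric) (a b : Y) :
    ⟪a + b, S (a + b)⟫ = ⟪a, S a⟫ + 2 * ⟪b, S a⟫ + ⟪b, S b⟫ := by
  rw [map_add, inner_add_left, inner_add_right, inner_add_right, ← hS b a, real_inner_comm (S b)]
  ring

theorem intervalIntegral.integral_inner_add_inner_deriv {E : Type*} [NormedAddCommGroup E]
    [InnerProductSpace ℝ E] {f g : ℝ → E} (hf : ContDiff ℝ 1 f) (hg : ContDiff ℝ 1 g) (a b : ℝ) :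
    ∫ t in a..b, (⟪f t, deriv g t⟫ + ⟪deriv f t, g t⟫) = ⟪f b, g b⟫ - ⟪f a, g a⟫ :=
  integral_eq_sub_of_hasDerivAt
    (fun t _ => (hf.differentiable one_ne_zero t).hasDerivAt.inner ℝ
      (hg.differentiable one_ne_zero t).hasDerivAt)
    ((hf.continuous.inner (hg.continuous_deriv le_rfl)).add
      ((hf.continuous_deriv le_rfl).inner hg.continuous) |>.intervalIntegrable a b)

section Tikhonov

variable {X Y : Type*} [NormedAddCommGroup X] [InnerProductSpace ℝ X]
  [NormedAddCommGroup Y] [InnerProductSpace ℝ Y]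
  {F : ℝ → X →L[ℝ] Y} {L : ℝ → Y →L[ℝ] Y} {y : ℝ → Y} {α : ℝ}

variable (F L y α) in
noncomputable def tikhonovIntegrand (w : ℝ → X) (t : ℝ) : ℝ :=
  ⟪F t (w t) - y t, L t (F t (w t) - y t)⟫ + α * ‖deriv w t‖ ^ 2

theorem continuous_tikhonovIntegrand (hF : Continuous F) (hL : Continuous L) (hy : Continuous y)
    {w : ℝ → X} (hw : ContDiff ℝ 1 w) : Continuous (tikhonovIntegrand F L y α w) := by
  have hres : Continuous fun t => F t (w t) - y t := (hF.clm_apply hw.continuous).sub hy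
  exact (hres.inner (hL.clm_apply hres)).add
    (continuous_const.mul ((hw.continuous_deriv le_rfl).norm.pow 2))

theorem tikhonovIntegrand_nonneg (hL : ∀ t (z : Y), 0 ≤ ⟪z, L t z⟫) (hα : 0 ≤ α)
    (w : ℝ → X) (t : ℝ) : 0 ≤ tikhonovIntegrand F L y α w t :=
  add_nonneg (hL t _) (by positivity)

theorem tikhonovIntegrand_add_of_adjoint_eq [CompleteSpace X] [CompleteSpace Y]
    {u h : ℝ → X} {t : ℝ} (hLt : IsSelfAdjoint (L t)) (hu : DifferentiableAt ℝ u t)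
    (hh : DifferentiableAt ℝ h t)
    (hEL : (F t).adjoint (L t (F t (u t) - y t)) = α • deriv (deriv u) t) :
    tikhonovIntegrand F L y α (u + h) t = tikhonovIntegrand F L y α u t
      + 2 * α * (⟪deriv u t, deriv h t⟫ + ⟪deriv (deriv u) t, h t⟫)
      + tikhonovIntegrand F L 0 α h t := by
  have hres : F t ((u + h) t) - y t = (F t (u t) - y t) + F t (h t) := by
    rw [Pi.add_apply, map_add]; abel
  have hquad := hLt.isSymmetric.inner_add_apply_add
  simp only [ContinuousLinearMap.coe_coe] at hquad
  simp only [tikhonovIntegrand, hres, hquad, deriv_add hu hh, norm_add_sq_real, Pi.zero_apply,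
    sub_zero]
  rw [← ContinuousLinearMap.adjoint_inner_right, hEL, real_inner_smul_right,
    real_inner_comm (deriv (deriv u) t)]
  ring

theorem integral_tikhonovIntegrand_add_of_adjoint_eq [CompleteSpace X] [CompleteSpace Y]
    (hF : Continuous F) (hL : Continuous L) (hy : Continuous y) {a b : ℝ} {u h : ℝ → X}
    (hLsa : ∀ t ∈ Set.uIcc a b, IsSelfAdjoint (L t)) (hu : ContDiff ℝ 2 u)
    (hh : ContDiff ℝ 1 h)
    (hEL : ∀ t ∈ Set.uIcc a b,
      (F t).adjoint (L t (F t (u t) - y t)) = α • deriv (deriv u) t) :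
    ∫ t in a..b, tikhonovIntegrand F L y α (u + h) t =
      (∫ t in a..b, tikhonovIntegrand F L y α u t)
        + 2 * α * (⟪deriv u b, h b⟫ - ⟪deriv u a, h a⟫)
        + ∫ t in a..b, tikhonovIntegrand F L 0 α h t := by
  have hu1 : ContDiff ℝ 1 u := hu.of_le one_le_two
  have hu' : ContDiff ℝ 1 (deriv u) := hu.deriv'
  have hIu : IntervalIntegrable (tikhonovIntegrand F L y α u) volume a b :=
    (continuous_tikhonovIntegrand hF hL hy hu1).intervalIntegrable a b
  have hIcross : IntervalIntegrable
      (fun t => 2 * α * (⟪deriv u t, deriv h t⟫ + ⟪deriv (deriv u) t, h t⟫)) volume a b :=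
    (continuous_const.mul ((hu'.continuous.inner (hh.continuous_deriv le_rfl)).add
      ((hu'.continuous_deriv le_rfl).inner hh.continuous))).intervalIntegrable a b
  rw [integral_congr fun t ht => tikhonovIntegrand_add_of_adjoint_eq (hLsa t ht)
      (hu1.differentiable one_ne_zero t) (hh.differentiable one_ne_zero t) (hEL t ht),
    integral_add (hIu.add hIcross), integral_add hIu hIcross, integral_const_mul,
    integral_inner_add_inner_deriv hu' hh]
  exact (continuous_tikhonovIntegrand hF hL continuous_const hh).intervalIntegrable
    (μ := volume) a b

end Tikhonov

/-- A twice continuously differentiable solution of the Euler–Lagrange equation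
`F(t)* L(t) F(t) u(t) - α u''(t) = F(t)* L(t) y(t)` on `[0,T]` with `u(0) = u₀` and
`u'(T) = 0` minimizes the Tikhonov functional
`J(w) = ½∫₀ᵀ ⟨F w - y, L (F w - y)⟩ + α‖w'‖² dt` over smooth `w` with `w(0) = u₀`. -/
theorem EulerLagrange_implies_Tikhonov_minimizer
    {X Y : Type*} [NormedAddCommGroup X] [InnerProductSpace ℝ X] [CompleteSpace X]
    [NormedAddCommGroup Y] [InnerProductSpace ℝ Y] [CompleteSpace Y]
    (T : ℝ) (hT : 0 < T) (α : ℝ) (hα : 0 < α)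
    (F : ℝ → X →L[ℝ] Y) (L : ℝ → Y →L[ℝ] Y) (y : ℝ → Y)
    (hF : Continuous F) (hL : Continuous L) (hy : Continuous y)
    (hLsa : ∀ t, IsSelfAdjoint (L t))
    (hLpos : ∀ t (z : Y), 0 ≤ ⟪z, L t z⟫)
    (u₀ : X) (u : ℝ → X) (hu : ContDiff ℝ 2 u)
    (heq : ∀ t ∈ Set.Icc (0 : ℝ) T,
      (F t).adjoint ((L t) ((F t) (u t))) - α • deriv (deriv u) t =
        (F t).adjoint ((L t) (y t)))
    (hu0 : u 0 = u₀) (huT : deriv u T = 0) :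
    let J : (ℝ → X) → ℝ := fun w =>
      (1 / 2) * ∫ t in (0 : ℝ)..T,
        (⟪(F t) (w t) - y t, (L t) ((F t) (w t) - y t)⟫ + α * ‖deriv w t‖ ^ 2)
    ∀ w : ℝ → X, ContDiff ℝ 1 w → w 0 = u₀ → J u ≤ J w := by
  intro J w hw hw0
  have hEL : ∀ t ∈ Set.uIcc 0 T,
      (F t).adjoint (L t (F t (u t) - y t)) = α • deriv (deriv u) t := by
    intro t ht
    rw [map_sub, map_sub, ← heq t (by rwa [Set.uIcc_of_le hT.le] at ht), sub_sub_cancel]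
  have hexpand := integral_tikhonovIntegrand_add_of_adjoint_eq hF hL hy (h := w - u)
    (fun t _ => hLsa t) hu (hw.sub (hu.of_le one_le_two)) hEL
  have hrem : 0 ≤ ∫ t in 0..T, tikhonovIntegrand F L 0 α (w - u) t :=
    integral_nonneg hT.le fun t _ => tikhonovIntegrand_nonneg hLpos hα.le (w - u) t
  rw [add_sub_cancel] at hexpand
  simp only [huT, hu0, hw0, Pi.sub_apply, sub_self, inner_zero_left, inner_zero_right] at hexpand
  show 1 / 2 * ∫ t in 0..T, tikhonovIntegrand F L y α u t
    ≤ 1 / 2 * ∫ t in 0..T, tikhonovIntegrand F L y α w t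
  linarith
end

section
/- Let Q, b, u be continuously differentiable maps on [0,T] with values in L(X), X, X respectively, satisfying Q'(t) = Q(t)* M(t)^{-1} Q(t) - F(t)* L(t) F(t), b'(t) = Q(t)* M(t)^{-1} b(t) + F(t)* L(t) y(t), u'(t) = -M(t)^{-1}(Q(t) u(t) + b(t)), with Q(T) = 0 and b(T) = 0. Then u satisfies the second-order equation F(t)* L(t) F(t) u(t) - (M u')'(t) = F(t)* L(t) y(t) on [0,T] and u'(T) = 0. -/
/-!
The derivative `Q* M⁻¹ Q - F* L F` of `Q` is self-adjoint for every `t`, so `Q* - Q` is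
constant; as `Q(T) = 0`, `Q` is self-adjoint throughout. Since `M u' = -(Q u + b)`,
differentiating gives `(M u')' = -(Q' u + Q u' + b')`, and with `Q* = Q` the terms
`Q M⁻¹ Q u` and `Q M⁻¹ b` cancel against `Q u' = -Q M⁻¹ (Q u + b)`, leaving `F* L F u - F* L y`.
-/

open scoped RealInnerProductSpace

theorem IsSelfAdjoint.of_mul_eq_one {R : Type*} [Monoid R] [StarMul R] {a b : R}
    (ha : IsSelfAdjoint a) (hab : a * b = 1) : IsSelfAdjoint b :=
  calc star b = star b * (a * b) := by rw [hab, mul_one]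
    _ = star (a * b) * b := by rw [← mul_assoc, star_mul, ha.star_eq]
    _ = b := by rw [hab, star_one, one_mul]

theorem IsSelfAdjoint.of_hasDerivAt {E : Type*} [NormedAddCommGroup E] [NormedSpace ℝ E]
    [StarAddMonoid E] [StarModule ℝ E] [ContinuousStar E] {f f' : ℝ → E}
    (hf : ∀ t, HasDerivAt f (f' t) t) (hf' : ∀ t, IsSelfAdjoint (f' t)) {T : ℝ}
    (hT : IsSelfAdjoint (f T)) (t : ℝ) : IsSelfAdjoint (f t) := by
  have hderiv : ∀ s, HasDerivAt (fun s => star (f s) - f s) 0 s := fun s => by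
    have := (hf s).star.sub (hf s)
    rwa [(hf' s).star_eq, sub_self] at this
  have hconst := is_const_of_deriv_eq_zero (fun s => (hderiv s).differentiableAt)
    (fun s => (hderiv s).deriv) t T
  rw [isSelfAdjoint_iff]
  simpa [hT.star_eq, sub_eq_zero] using hconst

theorem riccati_system_gives_second_order_equation_general
    {X Y : Type*} [NormedAddCommGroup X] [InnerProductSpace ℝ X] [CompleteSpace X]
    [NormedAddCommGroup Y] [InnerProductSpace ℝ Y] [CompleteSpace Y]
    (T : ℝ)
    (F : ℝ → X →L[ℝ] Y) (L : ℝ → Y →L[ℝ] Y) (M Minv : ℝ → X →L[ℝ] X) (y : ℝ → Y)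
    (hLsa : ∀ t, IsSelfAdjoint (L t)) (hMsa : ∀ t, IsSelfAdjoint (M t))
    (hMinv₁ : ∀ t, (M t) ∘L (Minv t) = 1)
    (Q : ℝ → X →L[ℝ] X) (b : ℝ → X) (u : ℝ → X)
    (hQ : ∀ t : ℝ, HasDerivAt Q
      ((Q t).adjoint ∘L ((Minv t) ∘L (Q t)) - (F t).adjoint ∘L ((L t) ∘L (F t))) t)
    (hb : ∀ t : ℝ, HasDerivAt b
      ((Q t).adjoint ((Minv t) (b t)) + (F t).adjoint ((L t) (y t))) t)
    (hu : ∀ t : ℝ, HasDerivAt u (-(Minv t) ((Q t) (u t) + b t)) t)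
    (hQT : Q T = 0) (hbT : b T = 0) :
    let du : ℝ → X := fun t => -(Minv t) ((Q t) (u t) + b t)
    (∀ t : ℝ, HasDerivAt (fun s => (M s) (du s))
      ((F t).adjoint ((L t) ((F t) (u t))) - (F t).adjoint ((L t) (y t))) t) ∧
    du T = 0 := by
  intro du
  have hMinv_sa (t : ℝ) : IsSelfAdjoint (Minv t) := (hMsa t).of_mul_eq_one (hMinv₁ t)
  have hQsa : ∀ t, IsSelfAdjoint (Q t) :=
    IsSelfAdjoint.of_hasDerivAt hQ
      (fun t => ((hMinv_sa t).adjoint_conj (Q t)).sub ((hLsa t).adjoint_conj (F t)))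
      (hQT ▸ .zero _ : IsSelfAdjoint (Q T))
  have hMdu : (fun s => M s (du s)) = fun s => -(Q s (u s) + b s) := funext fun s => by
    simp only [du, map_neg, ← ContinuousLinearMap.comp_apply, hMinv₁ s, one_apply_eq_self]
  refine ⟨fun t => ?_, by simp [du, hQT, hbT]⟩
  rw [hMdu]
  refine (((hQ t).clm_apply (hu t)).add (hb t)).neg.congr_deriv ?_
  simp only [sub_apply, ContinuousLinearMap.comp_apply, map_add, map_neg,
    (hQsa t).adjoint_eq]
  abel

/-- If `Q, b, u` solve the Riccati system
`Q' = Q* M⁻¹ Q - F* L F`, `b' = Q* M⁻¹ b + F* L y`, `u' = -M⁻¹(Q u + b)` with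
`Q(T) = 0`, `b(T) = 0`, then `u` satisfies `F* L F u - (M u')' = F* L y` and `u'(T) = 0`. -/
theorem riccati_system_gives_second_order_equation
    {X Y : Type*} [NormedAddCommGroup X] [InnerProductSpace ℝ X] [CompleteSpace X]
    [NormedAddCommGroup Y] [InnerProductSpace ℝ Y] [CompleteSpace Y]
    (T : ℝ)
    (F : ℝ → X →L[ℝ] Y) (L : ℝ → Y →L[ℝ] Y) (M Minv : ℝ → X →L[ℝ] X) (y : ℝ → Y)
    (hF : Continuous F) (hL : Continuous L) (hM : Continuous M) (hy : Continuous y)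
    (hLsa : ∀ t, IsSelfAdjoint (L t)) (hMsa : ∀ t, IsSelfAdjoint (M t))
    (hMinv₁ : ∀ t, (M t) ∘L (Minv t) = 1) (hMinv₂ : ∀ t, (Minv t) ∘L (M t) = 1)
    (Q : ℝ → X →L[ℝ] X) (b : ℝ → X) (u : ℝ → X)
    (hQ : ∀ t : ℝ, HasDerivAt Q
      ((Q t).adjoint ∘L ((Minv t) ∘L (Q t)) - (F t).adjoint ∘L ((L t) ∘L (F t))) t)
    (hb : ∀ t : ℝ, HasDerivAt b
      ((Q t).adjoint ((Minv t) (b t)) + (F t).adjoint ((L t) (y t))) t)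
    (hu : ∀ t : ℝ, HasDerivAt u (-(Minv t) ((Q t) (u t) + b t)) t)
    (hQT : Q T = 0) (hbT : b T = 0) :
    let du : ℝ → X := fun t => -(Minv t) ((Q t) (u t) + b t)
    (∀ t : ℝ, HasDerivAt (fun s => (M s) (du s))
      ((F t).adjoint ((L t) ((F t) (u t))) - (F t).adjoint ((L t) (y t))) t) ∧
    du T = 0 :=
  riccati_system_gives_second_order_equation_general T F L M Minv y hLsa hMsa hMinv₁ Q b u hQ hb hu
    hQT hbT
end

section
/- Let α > 0, Δt > 0, and F_k : X → Y bounded linear operators with α^{-1}(Δt)² max_k ‖F_k‖² ≤ ½. Define the explicit Euler iteration Q_{k-1} = Q_k - Δt(-α^{-1} F_k* F_k + Q_k² ) backwards from Q_n = 0. Then each Q_k is self-adjoint positive semi-definite and satisfies Δt ‖Q_k‖ ≤ 1, i.e. Δt ≤ ‖Q_k‖^{-1} whenever Q_k ≠ 0. -/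
/-!
With `P_k = Δt • Q_k` the iteration reads `P_k = P_{k+1} - P_{k+1}² + α⁻¹ Δt² F_{k+1}* F_{k+1}`.
If `0 ≤ P_{k+1}` and `‖P_{k+1}‖ ≤ 1`, then `P_{k+1} - P_{k+1}²` is positive with quadratic form
at most `‖x‖²/4`, and the CFL condition makes the last term positive of norm at most `1/2`;
hence `P_k` is again positive with `‖P_k‖ ≤ 3/4 ≤ 1`, and the bounds propagate backwards
from `P_n = 0`.
-/

open scoped RealInnerProductSpace

namespace ContinuousLinearMap

variable {X : Type*} [NormedAddCommGroup X] [InnerProductSpace ℝ X]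

theorem real_inner_apply_self_le (T : X →L[ℝ] X) (x : X) : ⟪x, T x⟫ ≤ ‖T‖ * ‖x‖ ^ 2 :=
  calc ⟪x, T x⟫ ≤ ‖x‖ * ‖T x‖ := real_inner_le_norm _ _
    _ ≤ ‖x‖ * (‖T‖ * ‖x‖) := by gcongr; exact T.le_opNorm x
    _ = ‖T‖ * ‖x‖ ^ 2 := by ring

theorem IsPositive.norm_le_of_inner_le {T : X →L[ℝ] X} (hT : T.IsPositive) {c : ℝ} (hc : 0 ≤ c)
    (h : ∀ x, ⟪x, T x⟫ ≤ c * ‖x‖ ^ 2) : ‖T‖ ≤ c := by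
  rw [T.norm_eq_iSup_rayleighQuotient hT.isSymmetric]
  refine ciSup_le fun x => ?_
  rw [rayleighQuotient, reApplyInnerSelf_apply, RCLike.re_to_real, real_inner_comm,
    abs_of_nonneg (div_nonneg (hT.inner_nonneg_right x) (sq_nonneg _))]
  rcases eq_or_ne x 0 with rfl | hx
  · simpa using hc
  · exact div_le_of_le_mul₀ (sq_nonneg _) hc (h x)

theorem IsPositive.one_sub [CompleteSpace X] {P : X →L[ℝ] X} (hP : P.IsPositive) (hP1 : ‖P‖ ≤ 1) :
    (1 - P).IsPositive := by
  refine (isPositive_iff' _).2 ⟨(IsSelfAdjoint.one _).sub hP.isSelfAdjoint, fun x => ?_⟩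
  have := P.real_inner_apply_self_le x
  rw [sub_apply, one_apply_eq_self, inner_sub_left, real_inner_self_eq_norm_sq, real_inner_comm]
  nlinarith [sq_nonneg ‖x‖]

theorem IsPositive.sub_mul_self [CompleteSpace X] {P : X →L[ℝ] X} (hP : P.IsPositive)
    (hP1 : ‖P‖ ≤ 1) : (P - P * P).IsPositive := by
  have hQ := hP.one_sub hP1
  have key : P - P * P = (1 - P) ∘L P ∘L (1 - P).adjoint + P ∘L (1 - P) ∘L P.adjoint := by
    rw [hQ.isSelfAdjoint.adjoint_eq, hP.isSelfAdjoint.adjoint_eq]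
    change P - P * P = (1 - P) * P * (1 - P) + P * (1 - P) * P
    noncomm_ring
  rw [key]
  exact (hP.conj_adjoint _).add (hQ.conj_adjoint _)

theorem real_inner_sub_mul_self_apply_le {P : X →L[ℝ] X} (hP : (P : X →ₗ[ℝ] X).IsSymmetric)
    (x : X) : ⟪x, (P - P * P) x⟫ ≤ ‖x‖ ^ 2 / 4 := by
  have hPP : ⟪x, P (P x)⟫ = ‖P x‖ ^ 2 := (hP x (P x)).symm.trans (real_inner_self_eq_norm_sq _)
  have hCS : ⟪x, P x⟫ ≤ ‖x‖ * ‖P x‖ := real_inner_le_norm _ _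
  rw [sub_apply, mul_apply_eq_comp, inner_sub_right, hPP]
  nlinarith [sq_nonneg (‖x‖ - 2 * ‖P x‖)]

theorem norm_sub_mul_self_add_le_one {P K : X →L[ℝ] X} (hP : (P : X →ₗ[ℝ] X).IsSymmetric)
    (hK1 : ‖K‖ ≤ 1 / 2) (hPK : (P - P * P + K).IsPositive) :
    ‖P - P * P + K‖ ≤ 1 := by
  refine hPK.norm_le_of_inner_le zero_le_one fun x => ?_
  have hPP := real_inner_sub_mul_self_apply_le hP x
  have hKx := K.real_inner_apply_self_le x
  rw [add_apply, inner_add_right]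
  nlinarith [sq_nonneg ‖x‖]

end ContinuousLinearMap

open ContinuousLinearMap

/-- Under the CFL condition `α⁻¹(Δt)² max_k ‖F_k‖² ≤ ½`, the explicit Euler iteration
`Q_{k-1} = Q_k - Δt(-α⁻¹ F_k* F_k + Q_k²)` backwards from `Q_n = 0` produces self-adjoint
positive semi-definite operators satisfying `Δt‖Q_k‖ ≤ 1`. -/
theorem explicit_Euler_CFL_stability
    {X Y : Type*} [NormedAddCommGroup X] [InnerProductSpace ℝ X] [CompleteSpace X]
    [NormedAddCommGroup Y] [InnerProductSpace ℝ Y] [CompleteSpace Y]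
    (n : ℕ) (α Δt : ℝ) (hα : 0 < α) (hΔt : 0 < Δt)
    (F : ℕ → X →L[ℝ] Y)
    (hCFL : ∀ k, α⁻¹ * Δt ^ 2 * ‖F k‖ ^ 2 ≤ 1 / 2)
    (Q : ℕ → X →L[ℝ] X)
    (hQn : Q n = 0)
    (hrec : ∀ k < n, Q k = Q (k + 1) -
      Δt • (Q (k + 1) * Q (k + 1) - α⁻¹ • ((F (k + 1)).adjoint ∘L (F (k + 1))))) :
    ∀ k ≤ n, IsSelfAdjoint (Q k) ∧ (∀ x : X, 0 ≤ ⟪x, Q k x⟫) ∧ Δt * ‖Q k‖ ≤ 1 := by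
  set P : ℕ → X →L[ℝ] X := fun k => Δt • Q k with hPdef
  set K : ℕ → X →L[ℝ] X := fun k => (α⁻¹ * Δt ^ 2) • ((F k).adjoint ∘L F k) with hKdef
  have hstep : ∀ k < n, P k = P (k + 1) - P (k + 1) * P (k + 1) + K (k + 1) := by
    intro k hk
    simp only [hPdef, hKdef, hrec k hk, smul_sub, smul_mul_smul, smul_smul]
    module
  have hK : ∀ k, (K k).IsPositive := fun k =>
    (isPositive_adjoint_comp_self _).smul_of_nonneg (by positivity)
  have hK1 : ∀ k, ‖K k‖ ≤ 1 / 2 := fun k => by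
    rw [norm_smul, norm_adjoint_comp_self, Real.norm_of_nonneg (by positivity), ← sq]
    exact hCFL k
  have hPbound : ∀ k ≤ n, (P k).IsPositive ∧ ‖P k‖ ≤ 1 := by
    intro k hk
    induction hk using Nat.decreasingInduction with
    | self => simp [hPdef, hQn]
    | of_succ k hkn ih =>
      obtain ⟨hP, hP1⟩ := ih
      have hPk : (P k).IsPositive := hstep k hkn ▸ (hP.sub_mul_self hP1).add (hK _)
      refine ⟨hPk, ?_⟩
      rw [hstep k hkn] at hPk ⊢
      exact norm_sub_mul_self_add_le_one hP.isSymmetric (hK1 _) hPk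
  intro k hk
  obtain ⟨hPk, hPk1⟩ := hPbound k hk
  have hQk : (Q k).IsPositive := by
    simpa [hPdef, smul_smul, hΔt.ne'] using hPk.smul_of_nonneg (inv_nonneg.2 hΔt.le)
  refine ⟨hQk.isSelfAdjoint, hQk.inner_nonneg_right, ?_⟩
  simpa [hPdef, norm_smul, abs_of_pos hΔt] using hPk1
end

section
/- Consider sequences in a Hilbert space X with the dynamic u_{k+1} = u_k + v_k. For N ≥ 1 and k ∈ {0,…,N-1}, the Bellman principle holds: V(k,ξ) = min_{v ∈ X} { V(k+1, ξ+v) + ½⟨F_k ξ - y_k, L_k(F_k ξ - y_k)⟩ + (α/2)‖v‖² }, where V(k,ξ) := inf over all controls (v_k,…,v_{N-1}) ∈ X^{N-k} of J_k with u_k = ξ, and J_k(u,v) = ½[⟨F_N u_N - y_N, L_N(F_N u_N - y_N)⟩ + Σ_{j=k}^{N-1} ⟨F_j u_j - y_j, L_j(F_j u_j - y_j)⟩ + α‖v_j‖²]. -/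
/-!
Splitting off the first control gives
`J_k(ξ, v) = J_{k+1}(ξ + v_k, v) + ½⟨F_k ξ - y_k, L_k(F_k ξ - y_k)⟩ + (α/2)‖v_k‖²`,
which yields `≤` for every `w`. For equality one needs an optimal control. The cost `J_k(ξ, ·)`
depends only on the finitely many controls `v_k, …, v_{N-1}`; as a function of these it is
continuous and, since `L_j ≥ 0` makes the misfit terms convex and `α > 0`, strongly midpoint
convex. In the complete space `X^{N-k}` a minimising sequence is then Cauchy, and its limit is a
minimiser.
-/

open scoped RealInnerProductSpace

/-- Trajectory of the dynamic `u_{k+1} = u_k + v_k` starting at `ξ` at time `k`. -/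
noncomputable def bellmanTraj {X : Type*} [NormedAddCommGroup X]
    (ξ : X) (k : ℕ) (v : ℕ → X) (j : ℕ) : X :=
  ξ + ∑ i ∈ Finset.Ico k j, v i

/-- The cost-to-go `J_k(u,v)` for the discrete control problem, with trajectory starting
at `ξ` at time `k` driven by the controls `v`. -/
noncomputable def bellmanCost {X Y : Type*}
    [NormedAddCommGroup X] [InnerProductSpace ℝ X]
    [NormedAddCommGroup Y] [InnerProductSpace ℝ Y]
    (N : ℕ) (α : ℝ) (F : ℕ → X →L[ℝ] Y) (L : ℕ → Y →L[ℝ] Y) (y : ℕ → Y)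
    (k : ℕ) (ξ : X) (v : ℕ → X) : ℝ :=
  (1 / 2) * (⟪(F N) (bellmanTraj ξ k v N) - y N,
      (L N) ((F N) (bellmanTraj ξ k v N) - y N)⟫ +
    ∑ j ∈ Finset.Ico k N,
      (⟪(F j) (bellmanTraj ξ k v j) - y j, (L j) ((F j) (bellmanTraj ξ k v j) - y j)⟫ +
        α * ‖v j‖ ^ 2))

/-- The value function `V(k,ξ)`: the infimum of the cost-to-go over all controls. -/
noncomputable def bellmanValue {X Y : Type*}
    [NormedAddCommGroup X] [InnerProductSpace ℝ X]
    [NormedAddCommGroup Y] [InnerProductSpace ℝ Y]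
    (N : ℕ) (α : ℝ) (F : ℕ → X →L[ℝ] Y) (L : ℕ → Y →L[ℝ] Y) (y : ℕ → Y)
    (k : ℕ) (ξ : X) : ℝ :=
  ⨅ v : ℕ → X, bellmanCost N α F L y k ξ v

open Filter Topology

theorem sq_norm_pi_le_sum {ι E : Type*} [Fintype ι] [SeminormedAddCommGroup E] (a : ι → E) :
    ‖a‖ ^ 2 ≤ ∑ i, ‖a i‖ ^ 2 := by
  have hle : ‖a‖ ≤ √(∑ i, ‖a i‖ ^ 2) :=
    (pi_norm_le_iff_of_nonneg (Real.sqrt_nonneg _)).2 fun i => Real.le_sqrt_of_sq_le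
      (Finset.single_le_sum (fun j _ => sq_nonneg ‖a j‖) (Finset.mem_univ i))
  calc ‖a‖ ^ 2 ≤ √(∑ i, ‖a i‖ ^ 2) ^ 2 := by gcongr
    _ = ∑ i, ‖a i‖ ^ 2 := Real.sq_sqrt (by positivity)

theorem exists_forall_le_of_midpoint_strong_convex {E : Type*} [NormedAddCommGroup E]
    [NormedSpace ℝ E] [CompleteSpace E] {f : E → ℝ} {c : ℝ} (hc : 0 < c)
    (hf : Continuous f) (hbdd : BddBelow (Set.range f))
    (hmid : ∀ a b, f ((2⁻¹ : ℝ) • (a + b)) ≤ (f a + f b) / 2 - c * ‖a - b‖ ^ 2) :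
    ∃ u, ∀ v, f u ≤ f v := by
  obtain ⟨t, -, hlim, hmem⟩ := exists_seq_tendsto_sInf (Set.range_nonempty f) hbdd
  choose s hs using hmem
  replace hlim : Tendsto (fun n => f (s n)) atTop (𝓝 (sInf (Set.range f))) := by
    simpa only [hs] using hlim
  have hm : ∀ x, sInf (Set.range f) ≤ f x := fun x => csInf_le hbdd ⟨x, rfl⟩
  -- a minimising sequence is Cauchy, since midpoints cannot go below the infimum
  have hcauchy : CauchySeq s := by
    refine Metric.cauchySeq_iff'.2 fun ε hε => ?_
    obtain ⟨n₀, hn₀⟩ := eventually_atTop.1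
      (hlim.eventually (gt_mem_nhds (lt_add_of_pos_right _ (by positivity : 0 < c * ε ^ 2))))
    refine ⟨n₀, fun n hn => ?_⟩
    have hsq : c * dist (s n) (s n₀) ^ 2 < c * ε ^ 2 := by
      rw [dist_eq_norm]
      linarith [hmid (s n) (s n₀), hm ((2⁻¹ : ℝ) • (s n + s n₀)), hn₀ n hn, hn₀ n₀ le_rfl]
    exact lt_of_pow_lt_pow_left₀ 2 hε.le (lt_of_mul_lt_mul_left hsq hc.le)
  obtain ⟨u, hu⟩ := cauchySeq_tendsto_of_complete hcauchy
  have hfu : f u = sInf (Set.range f) := tendsto_nhds_unique ((hf.tendsto u).comp hu) hlim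
  exact ⟨u, fun v => hfu ▸ hm v⟩

section
variable {ι R M : Type*} [DecidableEq ι] [Semiring R] [TopologicalSpace M] [AddCommMonoid M]
  [Module R M]

variable (R) in
def zeroExtend (S : Finset ι) : (S → M) →L[R] (ι → M) :=
  ContinuousLinearMap.pi fun j => if h : j ∈ S then ContinuousLinearMap.proj ⟨j, h⟩ else 0

@[simp]
theorem zeroExtend_apply_coe {S : Finset ι} (a : S → M) (i : S) : zeroExtend R S a i = a i := by
  simp [zeroExtend]

end

section
variable {X Y : Type*} [NormedAddCommGroup X] [InnerProductSpace ℝ X]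
  [NormedAddCommGroup Y] [InnerProductSpace ℝ Y]

theorem inner_map_self_midpoint {𝓕 : Type*} [FunLike 𝓕 Y Y] [LinearMapClass 𝓕 ℝ Y Y] (T : 𝓕)
    (a b : Y) :
    ⟪(2⁻¹ : ℝ) • (a + b), T ((2⁻¹ : ℝ) • (a + b))⟫ =
      (⟪a, T a⟫ + ⟪b, T b⟫) / 2 - ⟪a - b, T (a - b)⟫ / 4 := by
  simp only [map_add, map_sub, map_smul, inner_add_left, inner_add_right, inner_sub_left,
    inner_sub_right, real_inner_smul_left, real_inner_smul_right]
  ring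

theorem norm_midpoint_sq (a b : X) :
    ‖(2⁻¹ : ℝ) • (a + b)‖ ^ 2 = (‖a‖ ^ 2 + ‖b‖ ^ 2) / 2 - ‖a - b‖ ^ 2 / 4 := by
  rw [norm_smul, mul_pow, Real.norm_of_nonneg (by norm_num)]
  linarith [parallelogram_law_with_norm ℝ a b]

def weightedMisfit (F : X →L[ℝ] Y) (L : Y →L[ℝ] Y) (y : Y) (x : X) : ℝ :=
  ⟪F x - y, L (F x - y)⟫

theorem weightedMisfit_midpoint_le {F : X →L[ℝ] Y} {L : Y →L[ℝ] Y} (hL : ∀ z, 0 ≤ ⟪z, L z⟫)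
    (y : Y) (a b : X) :
    weightedMisfit F L y ((2⁻¹ : ℝ) • (a + b)) ≤
      (weightedMisfit F L y a + weightedMisfit F L y b) / 2 := by
  have hres : F ((2⁻¹ : ℝ) • (a + b)) - y = (2⁻¹ : ℝ) • ((F a - y) + (F b - y)) := by
    rw [map_smul, map_add]
    module
  unfold weightedMisfit
  rw [hres, inner_map_self_midpoint L]
  linarith [hL ((F a - y) - (F b - y))]

end

section Trajectory
variable {X : Type*} [NormedAddCommGroup X] {ξ : X} {k j : ℕ} {v w : ℕ → X}

theorem bellmanTraj_self : bellmanTraj ξ k v k = ξ := by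
  simp [bellmanTraj]

theorem bellmanTraj_of_lt (h : k < j) :
    bellmanTraj ξ k v j = bellmanTraj (ξ + v k) (k + 1) v j := by
  simp only [bellmanTraj, Finset.sum_eq_sum_Ico_succ_bot h, add_assoc]

theorem bellmanTraj_congr {N : ℕ} (hj : j ≤ N) (h : ∀ i ∈ Finset.Ico k N, v i = w i) :
    bellmanTraj ξ k v j = bellmanTraj ξ k w j := by
  unfold bellmanTraj
  congr 1
  exact Finset.sum_congr rfl fun i hi => h i (Finset.Ico_subset_Ico_right hj hi)

theorem bellmanTraj_midpoint [Module ℝ X] :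
    bellmanTraj ξ k ((2⁻¹ : ℝ) • (v + w)) j =
      (2⁻¹ : ℝ) • (bellmanTraj ξ k v j + bellmanTraj ξ k w j) := by
  simp only [bellmanTraj, Pi.smul_apply, Pi.add_apply, ← Finset.smul_sum, Finset.sum_add_distrib]
  module

end Trajectory

section Cost
variable {X Y : Type*} [NormedAddCommGroup X] [InnerProductSpace ℝ X]
  [NormedAddCommGroup Y] [InnerProductSpace ℝ Y]

variable (N : ℕ) (α : ℝ) (F : ℕ → X →L[ℝ] Y) (L : ℕ → Y →L[ℝ] Y) (y : ℕ → Y) (k : ℕ) (ξ : X)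

theorem bellmanCost_eq_weightedMisfit (v : ℕ → X) :
    bellmanCost N α F L y k ξ v =
      1 / 2 * (weightedMisfit (F N) (L N) (y N) (bellmanTraj ξ k v N) +
        ∑ j ∈ Finset.Ico k N,
          (weightedMisfit (F j) (L j) (y j) (bellmanTraj ξ k v j) + α * ‖v j‖ ^ 2)) :=
  rfl

theorem bellmanCost_nonneg (hα : 0 ≤ α) (hL : ∀ j z, 0 ≤ ⟪z, L j z⟫) (v : ℕ → X) :
    0 ≤ bellmanCost N α F L y k ξ v := by
  rw [bellmanCost_eq_weightedMisfit]
  have hsum := Finset.sum_nonneg fun j (_ : j ∈ Finset.Ico k N) =>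
    add_nonneg (hL j (F j (bellmanTraj ξ k v j) - y j)) (mul_nonneg hα (sq_nonneg ‖v j‖))
  have hterminal := hL N (F N (bellmanTraj ξ k v N) - y N)
  unfold weightedMisfit
  positivity

theorem bellmanCost_bddBelow (hα : 0 ≤ α) (hL : ∀ j z, 0 ≤ ⟪z, L j z⟫) :
    BddBelow (Set.range (bellmanCost N α F L y k ξ)) :=
  ⟨0, Set.forall_mem_range.2 (bellmanCost_nonneg N α F L y k ξ hα hL)⟩

theorem bellmanValue_le_bellmanCost (hα : 0 ≤ α) (hL : ∀ j z, 0 ≤ ⟪z, L j z⟫) (v : ℕ → X) :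
    bellmanValue N α F L y k ξ ≤ bellmanCost N α F L y k ξ v :=
  ciInf_le (bellmanCost_bddBelow N α F L y k ξ hα hL) v

theorem bellmanCost_congr {v w : ℕ → X} (h : ∀ i ∈ Finset.Ico k N, v i = w i) :
    bellmanCost N α F L y k ξ v = bellmanCost N α F L y k ξ w := by
  simp only [bellmanCost_eq_weightedMisfit, bellmanTraj_congr le_rfl h]
  congr 2
  refine Finset.sum_congr rfl fun j hj => ?_
  rw [bellmanTraj_congr (Finset.mem_Ico.1 hj).2.le h, h j hj]

theorem bellmanCost_eq_succ (hk : k < N) (v : ℕ → X) :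
    bellmanCost N α F L y k ξ v =
      bellmanCost N α F L y (k + 1) (ξ + v k) v +
        1 / 2 * weightedMisfit (F k) (L k) (y k) ξ + α / 2 * ‖v k‖ ^ 2 := by
  have htail : ∀ j ∈ Finset.Ico (k + 1) N,
      bellmanTraj ξ k v j = bellmanTraj (ξ + v k) (k + 1) v j :=
    fun j hj => bellmanTraj_of_lt (Finset.mem_Ico.1 hj).1
  simp only [bellmanCost_eq_weightedMisfit, Finset.sum_eq_sum_Ico_succ_bot hk, bellmanTraj_self,
    bellmanTraj_of_lt hk]
  rw [Finset.sum_congr rfl fun j hj => by rw [htail j hj]]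
  ring

theorem continuous_bellmanCost : Continuous (bellmanCost N α F L y k ξ) := by
  unfold bellmanCost bellmanTraj
  fun_prop

theorem bellmanCost_midpoint_le (hL : ∀ j z, 0 ≤ ⟪z, L j z⟫) (v w : ℕ → X) :
    bellmanCost N α F L y k ξ ((2⁻¹ : ℝ) • (v + w)) ≤
      (bellmanCost N α F L y k ξ v + bellmanCost N α F L y k ξ w) / 2 -
        α / 8 * ∑ j ∈ Finset.Ico k N, ‖v j - w j‖ ^ 2 := by
  have hmisfit : ∀ j,
      weightedMisfit (F j) (L j) (y j) (bellmanTraj ξ k ((2⁻¹ : ℝ) • (v + w)) j) ≤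
      (weightedMisfit (F j) (L j) (y j) (bellmanTraj ξ k v j) +
        weightedMisfit (F j) (L j) (y j) (bellmanTraj ξ k w j)) / 2 := fun j => by
    rw [bellmanTraj_midpoint]
    exact weightedMisfit_midpoint_le (hL j) _ _ _
  have hsum := Finset.sum_le_sum fun j (_ : j ∈ Finset.Ico k N) =>
    add_le_add (hmisfit j) (le_of_eq (congrArg (α * ·) (norm_midpoint_sq (v j) (w j))))
  simp only [mul_sub, mul_div_assoc', Finset.sum_sub_distrib, Finset.sum_add_distrib,
    ← Finset.sum_div, ← Finset.mul_sum] at hsum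
  simp only [bellmanCost_eq_weightedMisfit, Pi.smul_apply, Pi.add_apply, Finset.sum_add_distrib,
    ← Finset.mul_sum]
  linarith [hmisfit N]

theorem exists_forall_bellmanCost_le [CompleteSpace X] (hα : 0 < α)
    (hL : ∀ j z, 0 ≤ ⟪z, L j z⟫) :
    ∃ u, ∀ v, bellmanCost N α F L y k ξ u ≤ bellmanCost N α F L y k ξ v := by
  set S := Finset.Ico k N
  let f : (S → X) → ℝ := fun a => bellmanCost N α F L y k ξ (zeroExtend ℝ S a)
  have hmid : ∀ a b, f ((2⁻¹ : ℝ) • (a + b)) ≤ (f a + f b) / 2 - α / 8 * ‖a - b‖ ^ 2 := by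
    intro a b
    have hgap : ‖a - b‖ ^ 2 ≤ ∑ j ∈ S, ‖zeroExtend ℝ S a j - zeroExtend ℝ S b j‖ ^ 2 := by
      rw [← Finset.sum_coe_sort S]
      simpa only [zeroExtend_apply_coe, Pi.sub_apply] using sq_norm_pi_le_sum (a - b)
    have hcost := bellmanCost_midpoint_le N α F L y k ξ hL (zeroExtend ℝ S a) (zeroExtend ℝ S b)
    simp only [f, map_smul, map_add]
    linarith [mul_le_mul_of_nonneg_left hgap (by positivity : (0 : ℝ) ≤ α / 8)]
  obtain ⟨a, ha⟩ := exists_forall_le_of_midpoint_strong_convex (by positivity)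
    ((continuous_bellmanCost N α F L y k ξ).comp (zeroExtend ℝ S).continuous)
    ⟨0, Set.forall_mem_range.2 fun a => bellmanCost_nonneg N α F L y k ξ hα.le hL _⟩ hmid
  refine ⟨zeroExtend ℝ S a, fun v => ?_⟩
  calc f a ≤ f fun i => v i := ha _
    _ = bellmanCost N α F L y k ξ v :=
      bellmanCost_congr N α F L y k ξ fun i hi => zeroExtend_apply_coe _ ⟨i, hi⟩

theorem bellmanValue_le_add (hα : 0 ≤ α) (hL : ∀ j z, 0 ≤ ⟪z, L j z⟫) (hk : k < N) (w : X) :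
    bellmanValue N α F L y k ξ ≤
      bellmanValue N α F L y (k + 1) (ξ + w) +
        1 / 2 * weightedMisfit (F k) (L k) (y k) ξ + α / 2 * ‖w‖ ^ 2 := by
  suffices h : ∀ v, bellmanValue N α F L y k ξ - 1 / 2 * weightedMisfit (F k) (L k) (y k) ξ -
      α / 2 * ‖w‖ ^ 2 ≤ bellmanCost N α F L y (k + 1) (ξ + w) v by
    have hinf : _ ≤ bellmanValue N α F L y (k + 1) (ξ + w) := le_ciInf h
    linarith
  intro v
  have hupdate := bellmanValue_le_bellmanCost N α F L y k ξ hα hL (Function.update v k w)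
  rw [bellmanCost_eq_succ N α F L y k ξ hk, Function.update_self,
    bellmanCost_congr N α F L y (k + 1) (ξ + w) (w := v)] at hupdate
  · linarith
  · exact fun i hi => Function.update_of_ne (Nat.succ_le_iff.1 (Finset.mem_Ico.1 hi).1).ne' w v

end Cost

theorem bellman_principle_general
    {X Y : Type*} [NormedAddCommGroup X] [InnerProductSpace ℝ X] [CompleteSpace X]
    [NormedAddCommGroup Y] [InnerProductSpace ℝ Y]
    (N : ℕ) (α : ℝ) (hα : 0 < α)
    (F : ℕ → X →L[ℝ] Y) (L : ℕ → Y →L[ℝ] Y)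
    (hLpos : ∀ k (z : Y), 0 ≤ ⟪z, L k z⟫)
    (y : ℕ → Y) (k : ℕ) (hk : k < N) (ξ : X) :
    ∃ v : X,
      bellmanValue N α F L y k ξ =
        bellmanValue N α F L y (k + 1) (ξ + v) +
          (1 / 2) * ⟪(F k) ξ - y k, (L k) ((F k) ξ - y k)⟫ + (α / 2) * ‖v‖ ^ 2 ∧
      ∀ w : X,
        bellmanValue N α F L y k ξ ≤
          bellmanValue N α F L y (k + 1) (ξ + w) +
            (1 / 2) * ⟪(F k) ξ - y k, (L k) ((F k) ξ - y k)⟫ + (α / 2) * ‖w‖ ^ 2 := by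
  have hle := bellmanValue_le_add N α F L y k ξ hα.le hLpos hk
  obtain ⟨u, hu⟩ := exists_forall_bellmanCost_le N α F L y k ξ hα hLpos
  refine ⟨u k, le_antisymm (hle (u k)) ?_, hle⟩
  calc bellmanValue N α F L y (k + 1) (ξ + u k) + 1 / 2 * weightedMisfit (F k) (L k) (y k) ξ +
        α / 2 * ‖u k‖ ^ 2
      ≤ bellmanCost N α F L y (k + 1) (ξ + u k) u + 1 / 2 * weightedMisfit (F k) (L k) (y k) ξ +
        α / 2 * ‖u k‖ ^ 2 := by
        gcongr
        exact bellmanValue_le_bellmanCost N α F L y (k + 1) (ξ + u k) hα.le hLpos u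
    _ = bellmanCost N α F L y k ξ u := (bellmanCost_eq_succ N α F L y k ξ hk u).symm
    _ ≤ bellmanValue N α F L y k ξ := le_ciInf hu

/-- The Bellman optimality principle for the discrete dynamic inverse problem:
`V(k,ξ) = min_{v ∈ X} { V(k+1, ξ+v) + ½⟨F_k ξ - y_k, L_k(F_k ξ - y_k)⟩ + (α/2)‖v‖² }`,
the minimum being attained. -/
theorem bellman_principle
    {X Y : Type*} [NormedAddCommGroup X] [InnerProductSpace ℝ X] [CompleteSpace X]
    [NormedAddCommGroup Y] [InnerProductSpace ℝ Y] [CompleteSpace Y]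
    (N : ℕ) (hN : 1 ≤ N) (α : ℝ) (hα : 0 < α)
    (F : ℕ → X →L[ℝ] Y) (L : ℕ → Y →L[ℝ] Y)
    (hLsa : ∀ k, IsSelfAdjoint (L k))
    (hLpos : ∀ k (z : Y), 0 ≤ ⟪z, L k z⟫)
    (y : ℕ → Y) (k : ℕ) (hk : k < N) (ξ : X) :
    ∃ v : X,
      bellmanValue N α F L y k ξ =
        bellmanValue N α F L y (k + 1) (ξ + v) +
          (1 / 2) * ⟪(F k) ξ - y k, (L k) ((F k) ξ - y k)⟫ + (α / 2) * ‖v‖ ^ 2 ∧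
      ∀ w : X,
        bellmanValue N α F L y k ξ ≤
          bellmanValue N α F L y (k + 1) (ξ + w) +
            (1 / 2) * ⟪(F k) ξ - y k, (L k) ((F k) ξ - y k)⟫ + (α / 2) * ‖w‖ ^ 2 :=
  bellman_principle_general N α hα F L hLpos y k hk ξ
end
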